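/- arXiv:2011.00389 — 2 statements merged into one kernel-verified Lean document; each statement's English description precedes it below -/
import Mathlib

section
/- Let L = L_I ∪ L_U with L_I ∩ L_U = ∅, let S = (S, s0, T_S) and I = (Q, q0, T_I) be IOLTSs over L. Then I ioco S (i.e., for every σ ∈ otr(S), out(q0 after σ) ⊆ out(s0 after σ)) holds if and only if I conf_{D,F} S holds with D = otr(S)·L_U (the concatenation of the language otr(S) with the set of one-letter words over L_U) and F = ∅. -/
/-!
An output `x ∈ L_U` is enabled after `σ` exactly when `σ·x` is an observable trace, since every
observable path for `σ·x` ends with an `x`-step out of a state reached after `σ`, possibly followed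
by τ-steps. Hence `out(I after σ) ⊆ out(S after σ)` says precisely that every trace `σ·x` of `I`
with `x` an output is a trace of `S`, which is the `D`-clause of `conf`; the `F`-clause is vacuous.
-/

/-- Observable paths of an IOLTS: `ObsPath step s σ q` means there is a path
from `s` to `q` whose sequence of non-τ labels (τ = `none`) is `σ`. -/
inductive ObsPath {S L : Type*} (step : S → Option L → S → Prop) :
    S → List L → S → Prop
  | refl (s : S) : ObsPath step s [] s
  | tau {s r q : S} {σ : List L} :
      step s none r → ObsPath step r σ q → ObsPath step s σ q
  | lbl {s r q : S} {l : L} {σ : List L} :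
      step s (some l) r → ObsPath step r σ q → ObsPath step s (l :: σ) q

/-- Observable trace language of an IOLTS with initial state `s0`. -/
def otr {S L : Type*} (step : S → Option L → S → Prop) (s0 : S) :
    Set (List L) :=
  {σ | ∃ q, ObsPath step s0 σ q}

/-- `s after σ`: the set of states reachable from `s` via observable path `σ`. -/
def after {S L : Type*} (step : S → Option L → S → Prop) (s : S) (σ : List L) :
    Set S :=
  {q | ObsPath step s σ q}

/-- `out(Q')`: the set of output labels enabled in some state of `Q'`. -/
def outOf {S L : Type*} (LU : Set L) (step : S → Option L → S → Prop)
    (Q' : Set S) : Set L :=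
  {x | x ∈ LU ∧ ∃ q ∈ Q', ∃ q', step q (some x) q'}

namespace ObsPath

variable {S L : Type*} {step : S → Option L → S → Prop}

theorem snoc {s r r' : S} {σ : List L} {x : L} (h : ObsPath step s σ r)
    (hx : step r (some x) r') : ObsPath step s (σ ++ [x]) r' := by
  induction h with
  | refl => exact lbl hx (refl _)
  | tau hτ _ ih => exact tau hτ (ih hx)
  | lbl hl _ ih => exact lbl hl (ih hx)

theorem exists_step_of_append_singleton {s q : S} {σ : List L} {x : L}
    (h : ObsPath step s (σ ++ [x]) q) : ∃ r, ObsPath step s σ r ∧ ∃ r', step r (some x) r' := by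
  generalize hw : σ ++ [x] = w at h
  induction h generalizing σ with
  | refl => simp at hw
  | tau hτ _ ih =>
    obtain ⟨r, hr, hx⟩ := ih hw
    exact ⟨r, tau hτ hr, hx⟩
  | @lbl s₁ r₁ _ l _ hl _ ih =>
    cases σ with
    | nil =>
      obtain ⟨rfl, -⟩ := List.cons.inj hw.symm
      exact ⟨s₁, refl _, r₁, hl⟩
    | cons a σ =>
      rw [List.cons_append, List.cons.injEq] at hw
      obtain ⟨rfl, hw⟩ := hw
      obtain ⟨r, hr, hx⟩ := ih hw
      exact ⟨r, lbl hl hr, hx⟩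

end ObsPath

theorem append_singleton_mem_otr_iff {S L : Type*} {step : S → Option L → S → Prop} {s : S}
    {σ : List L} {x : L} :
    σ ++ [x] ∈ otr step s ↔ ∃ r ∈ after step s σ, ∃ r', step r (some x) r' :=
  ⟨fun ⟨_, h⟩ => h.exists_step_of_append_singleton,
    fun ⟨_, hr, r', hx⟩ => ⟨r', hr.snoc hx⟩⟩

theorem mem_outOf_after_iff {S L : Type*} {LU : Set L} {step : S → Option L → S → Prop} {s : S}
    {σ : List L} {x : L} :
    x ∈ outOf LU step (after step s σ) ↔ x ∈ LU ∧ σ ++ [x] ∈ otr step s := by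
  rw [append_singleton_mem_otr_iff]
  rfl

theorem ioco_iff_conf_general {SS Q L : Type*} (LU : Set L)
    (stepS : SS → Option L → SS → Prop) (s0 : SS)
    (stepI : Q → Option L → Q → Prop) (q0 : Q) :
    (∀ σ ∈ otr stepS s0,
        outOf LU stepI (after stepI q0 σ) ⊆ outOf LU stepS (after stepS s0 σ)) ↔
      (let D : Set (List L) := {w | ∃ σ ∈ otr stepS s0, ∃ x ∈ LU, w = σ ++ [x]}
       let F : Set (List L) := ∅
       (∀ σ ∈ otr stepI q0 ∩ F, σ ∉ otr stepS s0) ∧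
       (∀ σ ∈ otr stepI q0 ∩ D, σ ∈ otr stepS s0)) := by
  simp only [Set.inter_empty, Set.mem_empty_iff_false, false_imp_iff, implies_true, true_and]
  constructor
  · rintro hioco _ ⟨hI, σ, hσ, x, hxU, rfl⟩
    exact (mem_outOf_after_iff.mp (hioco σ hσ (mem_outOf_after_iff.mpr ⟨hxU, hI⟩))).2
  · intro hconf σ hσ x hx
    obtain ⟨hxU, hI⟩ := mem_outOf_after_iff.mp hx
    exact mem_outOf_after_iff.mpr ⟨hxU, hconf _ ⟨hI, σ, hσ, x, hxU, rfl⟩⟩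

/-- `I ioco S` holds iff `I conf_{D,F} S` with
`D = otr(S)·L_U` and `F = ∅`. -/
theorem ioco_iff_conf {SS Q L : Type*} (LI LU : Set L)
    (h_union : LI ∪ LU = Set.univ) (h_disj : LI ∩ LU = ∅)
    (stepS : SS → Option L → SS → Prop) (s0 : SS)
    (stepI : Q → Option L → Q → Prop) (q0 : Q) :
    (∀ σ ∈ otr stepS s0,
        outOf LU stepI (after stepI q0 σ) ⊆ outOf LU stepS (after stepS s0 σ)) ↔
      (let D : Set (List L) := {w | ∃ σ ∈ otr stepS s0, ∃ x ∈ LU, w = σ ++ [x]}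
       let F : Set (List L) := ∅
       (∀ σ ∈ otr stepI q0 ∩ F, σ ∉ otr stepS s0) ∧
       (∀ σ ∈ otr stepI q0 ∩ D, σ ∈ otr stepS s0)) :=
  ioco_iff_conf_general LU stepS s0 stepI q0
end

section
/- Let A_S, A_D, A_F be DFAs over a finite alphabet L with state types of cardinality n_S, n_D, n_F respectively. Then there exists a DFA T over L with a state type of cardinality at most (n_S + 1)² · n_D · n_F whose accepted language is (L(A_D) ∩ L(A_S)ᶜ) ∪ (L(A_F) ∩ L(A_S)), where L(A_S)ᶜ = L* \ L(A_S). -/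
universe v

namespace DFA

variable {α : Type*} {σS σD σF : Type v}

def testSuite (AS : DFA α σS) (AD : DFA α σD) (AF : DFA α σF) : DFA α ((σD × σS) × (σF × σS)) :=
  (AD.inter ASᶜ).union (AF.inter AS)

theorem accepts_testSuite (AS : DFA α σS) (AD : DFA α σD) (AF : DFA α σF) :
    (testSuite AS AD AF).accepts = AD.accepts ⊓ AS.acceptsᶜ + AF.accepts ⊓ AS.accepts := by
  simp [testSuite]

theorem card_testSuite_le [Fintype σS] [Fintype σD] [Fintype σF] :
    Fintype.card ((σD × σS) × (σF × σS)) ≤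
      (Fintype.card σS + 1) ^ 2 * Fintype.card σD * Fintype.card σF := by
  simp only [Fintype.card_prod]
  have : Fintype.card σS * Fintype.card σS ≤ (Fintype.card σS + 1) ^ 2 := by nlinarith
  calc _ = Fintype.card σS * Fintype.card σS * Fintype.card σD * Fintype.card σF := by ring
    _ ≤ _ := by gcongr

end DFA

theorem test_suite_automaton_general {L QS QD QF : Type*}
    [Fintype QS] [Fintype QD] [Fintype QF]
    (AS : DFA L QS) (AD : DFA L QD) (AF : DFA L QF) :
    ∃ (Q : Type) (_ : Fintype Q) (T : DFA L Q),
      Fintype.card Q ≤ (Fintype.card QS + 1) ^ 2 * Fintype.card QD * Fintype.card QF ∧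
      ({w | w ∈ T.accepts} : Set (List L)) =
        ({w | w ∈ AD.accepts} ∩ {w | w ∈ AS.accepts}ᶜ) ∪
          ({w | w ∈ AF.accepts} ∩ {w | w ∈ AS.accepts}) := by
  -- `DFA.inter` and `DFA.union` need all state types in one universe, so move to `Fin n` states.
  refine ⟨_, inferInstance, DFA.testSuite (AS.reindex (Fintype.equivFin QS))
    (AD.reindex (Fintype.equivFin QD)) (AF.reindex (Fintype.equivFin QF)), ?_, ?_⟩
  · simpa only [Fintype.card_fin] using
      DFA.card_testSuite_le (σS := Fin (Fintype.card QS)) (σD := Fin (Fintype.card QD))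
        (σF := Fin (Fintype.card QF))
  · ext w
    simp only [DFA.accepts_testSuite, DFA.accepts_reindex, Language.mem_add, Language.mem_inf,
      Set.mem_ofPred_eq, Set.mem_union, Set.mem_inter_iff, Set.mem_compl_iff]
    rfl

/-- given DFAs `A_S`, `A_D`, `A_F` over `L` with `n_S`, `n_D`, `n_F`
states, there is a DFA `T` with at most `(n_S + 1)² · n_D · n_F` states accepting
exactly `(L(A_D) ∩ L(A_S)ᶜ) ∪ (L(A_F) ∩ L(A_S))`. -/
theorem test_suite_automaton {L QS QD QF : Type*} [Fintype L]
    [Fintype QS] [Fintype QD] [Fintype QF]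
    (AS : DFA L QS) (AD : DFA L QD) (AF : DFA L QF) :
    ∃ (Q : Type) (_ : Fintype Q) (T : DFA L Q),
      Fintype.card Q ≤ (Fintype.card QS + 1) ^ 2 * Fintype.card QD * Fintype.card QF ∧
      ({w | w ∈ T.accepts} : Set (List L)) =
        ({w | w ∈ AD.accepts} ∩ {w | w ∈ AS.accepts}ᶜ) ∪
          ({w | w ∈ AF.accepts} ∩ {w | w ∈ AS.accepts}) :=
  test_suite_automaton_general AS AD AF
end
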